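/- Let n ≥ 1 and let C be a cyclic ZMod 2-submodule of (Fin n → ZMod 2) with minimum distance at least 3 (every nonzero codeword has Hamming weight at least 3). Then for every l ∈ {0, 1, …, n−1} and all p, q ∈ {0, 1, …, n−1} with p ≠ q, the vector L(v_p, l) + L(v_q, l) does not belong to C. (This is the single-code core of the paper's main theorem: the shifted consecutive error set E^z_{l,n} is distinguishable, since two such errors have equal syndrome exactly when their difference lies in the kernel of the parity check matrix, which equals C.) -/

import Mathlib

/-!
Shifting back, `v_p + v_q` itself lies in the cyclic code `C`, hence so does its discrete
derivative `f + L(f, 1)`. Since `v_p + L(v_p, 1) = e_{n-p-1} + e_{n-1}`, the derivative of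
`v_p + v_q` is `e_{n-p-1} + e_{n-q-1}`, a nonzero word of weight at most 2, contradicting
minimum distance 3.
-/

/-- The consecutive tail vector `v_p`: indicator of the last `p` coordinates. -/
def tailVec (n p : ℕ) : Fin n → ZMod 2 := fun j => if n - p ≤ j.val then 1 else 0

/-- Left cyclic shift by `l` of a vector `v : Fin n → ZMod 2`. -/
def shiftL {n : ℕ} (v : Fin n → ZMod 2) (l : ℕ) : Fin n → ZMod 2 :=
  fun j => v ⟨(j.val + l) % n, Nat.mod_lt _ j.pos⟩

/-- A code is cyclic if it is invariant under left cyclic shifts. -/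
def IsCyclicCode {n : ℕ} (C : Submodule (ZMod 2) (Fin n → ZMod 2)) : Prop :=
  ∀ v ∈ C, ∀ l : ℕ, shiftL v l ∈ C

/-- The dual code `C⊥` with respect to the standard bilinear form. -/
def dualCode {n : ℕ} (C : Submodule (ZMod 2) (Fin n → ZMod 2)) :
    Submodule (ZMod 2) (Fin n → ZMod 2) where
  carrier := {u | ∀ w ∈ C, ∑ j, u j * w j = 0}
  add_mem' := by
    intro a b ha hb w hw
    simp only [Set.mem_setOf_eq, Pi.add_apply, add_mul] at *
    rw [Finset.sum_add_distrib, ha w hw, hb w hw, add_zero]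
  zero_mem' := by
    intro w hw
    simp
  smul_mem' := by
    intro c a ha w hw
    simp only [Set.mem_setOf_eq, Pi.smul_apply, smul_eq_mul, mul_assoc] at *
    rw [← Finset.mul_sum, ha w hw, mul_zero]

lemma hammingNorm_single_add_single_le {ι β : Type*} [Fintype ι] [DecidableEq ι]
    [AddZeroClass β] [DecidableEq β] (i j : ι) (a b : β) :
    hammingNorm (Pi.single i a + Pi.single j b : ι → β) ≤ 2 := by
  have hsupport :
      ({k | (Pi.single i a + Pi.single j b : ι → β) k ≠ 0} : Finset ι) ⊆ {i, j} := by
    intro k hk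
    by_contra hkij
    simp only [Finset.mem_insert, Finset.mem_singleton, not_or] at hkij
    simp [Finset.mem_filter, Pi.single_eq_of_ne hkij.1, Pi.single_eq_of_ne hkij.2] at hk
  exact (Finset.card_le_card hsupport).trans Finset.card_le_two

lemma single_add_single_notMem {ι R : Type*} [Fintype ι] [DecidableEq ι] [Semiring R]
    [Nontrivial R] [DecidableEq R] (C : Submodule R (ι → R))
    (hd : ∀ w ∈ C, w ≠ 0 → 3 ≤ hammingNorm w)
    {i j : ι} (hij : i ≠ j) : Pi.single i 1 + Pi.single j 1 ∉ C := by
  intro hmem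
  have hne : (Pi.single i 1 + Pi.single j 1 : ι → R) ≠ 0 := fun h => by
    simpa [Pi.single_eq_of_ne hij] using congrFun h i
  have := hd _ hmem hne
  have := hammingNorm_single_add_single_le i j (1 : R) 1
  omega

section Shift

variable {n : ℕ}

lemma shiftL_add (v w : Fin n → ZMod 2) (l : ℕ) :
    shiftL (v + w) l = shiftL v l + shiftL w l := rfl

lemma shiftL_shiftL (v : Fin n → ZMod 2) (l m : ℕ) :
    shiftL (shiftL v l) m = shiftL v (m + l) := by
  funext j
  simp only [shiftL, Nat.mod_add_mod, Nat.add_assoc]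

lemma shiftL_self (v : Fin n → ZMod 2) : shiftL v n = v := by
  funext j
  simp only [shiftL, Nat.add_mod_right, Nat.mod_eq_of_lt j.isLt]

lemma IsCyclicCode.mem_of_shiftL_mem {C : Submodule (ZMod 2) (Fin n → ZMod 2)}
    (hC : IsCyclicCode C) {v : Fin n → ZMod 2} {l : ℕ} (hl : l ≤ n) (hv : shiftL v l ∈ C) :
    v ∈ C := by
  simpa [shiftL_shiftL, Nat.sub_add_cancel hl, shiftL_self] using hC _ hv (n - l)

lemma tailVec_add_shiftL_one {p : ℕ} (hp : p < n) :
    tailVec n p + shiftL (tailVec n p) 1 =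
      Pi.single (⟨n - p - 1, by omega⟩ : Fin n) 1 + Pi.single ⟨n - 1, by omega⟩ 1 := by
  funext j
  have hj := j.isLt
  simp only [Pi.add_apply, tailVec, shiftL, Pi.single_apply, Fin.ext_iff]
  rcases Nat.lt_or_ge (j.val + 1) n with h | h
  · simp only [Nat.mod_eq_of_lt h]
    split_ifs <;> first | decide | omega
  · simp only [show j.val + 1 = n by omega, Nat.mod_self]
    split_ifs <;> first | decide | omega

end Shift

theorem stmt7_general (n : ℕ) (C : Submodule (ZMod 2) (Fin n → ZMod 2))
    (hC : IsCyclicCode C)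
    (hd : ∀ w ∈ C, w ≠ 0 → 3 ≤ hammingNorm w) :
    ∀ l < n, ∀ p q : ℕ, p < n → q < n → p ≠ q →
      shiftL (tailVec n p) l + shiftL (tailVec n q) l ∉ C := by
  intro l hl p q hp hq hpq hmem
  set f := tailVec n p + tailVec n q
  have hf : f ∈ C := hC.mem_of_shiftL_mem hl.le (by rwa [shiftL_add])
  have hdiff : f + shiftL f 1 ∈ C := add_mem hf (hC f hf 1)
  have hends : f + shiftL f 1 =
      Pi.single (⟨n - p - 1, by omega⟩ : Fin n) 1 + Pi.single ⟨n - q - 1, by omega⟩ 1 := by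
    have hchar : ∀ x : Fin n → ZMod 2, x + x = 0 := fun x =>
      funext fun _ => CharTwo.add_self_eq_zero _
    calc f + shiftL f 1
        = (tailVec n p + shiftL (tailVec n p) 1) + (tailVec n q + shiftL (tailVec n q) 1) := by
          rw [shiftL_add]; exact add_add_add_comm _ _ _ _
      _ = _ := by
          rw [tailVec_add_shiftL_one hp, tailVec_add_shiftL_one hq, add_add_add_comm, hchar,
            add_zero]
  rw [hends] at hdiff
  exact single_add_single_notMem C hd (by simp only [ne_eq, Fin.mk.injEq]; omega) hdiff

theorem stmt7 (n : ℕ) (hn : 1 ≤ n) (C : Submodule (ZMod 2) (Fin n → ZMod 2))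
    (hC : IsCyclicCode C)
    (hd : ∀ w ∈ C, w ≠ 0 → 3 ≤ hammingNorm w) :
    ∀ l < n, ∀ p q : ℕ, p < n → q < n → p ≠ q →
      shiftL (tailVec n p) l + shiftL (tailVec n q) l ∉ C :=
  stmt7_general n C hC hd
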